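/- arXiv:1105.2283 — 5 statements merged into one kernel-verified Lean document; each statement's English description precedes it below -/
import Mathlib

section
/- For every fixed real q > 0, the function p ↦ φ1(p,q) is monotone nondecreasing and continuous on [0,∞). -/
noncomputable def l (p q : ℝ) : ℤ := if q = 0 then 0 else ⌊p / q⌋

noncomputable def phi1 (p q : ℝ) : ℝ :=
  if Even (l p q) then q + (l p q : ℝ) * q / 2 else p - ((l p q : ℝ) - 1) * q / 2

noncomputable def phi2 (p q : ℝ) : ℝ :=
  if Even (l p q) then p - (l p q : ℝ) * q / 2 else ((l p q : ℝ) + 1) * q / 2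

lemma phi1_key (q : ℝ) (hq : 0 < q) (a b : ℝ) (ha : 0 ≤ a) (hab : a ≤ b) :
    phi1 a q ≤ phi1 b q ∧ phi1 b q ≤ phi1 a q + (b - a) := by
  have hq' : q ≠ 0 := ne_of_gt hq
  set m : ℤ := ⌊a / q⌋ with hm
  set n : ℤ := ⌊b / q⌋ with hn
  have hla : l a q = m := by simp [l, hq', hm]
  have hlb : l b q = n := by simp [l, hq', hn]
  have ha1 : (m : ℝ) * q ≤ a := by
    have := Int.floor_le (a / q); rw [← hm] at this
    calc (m : ℝ) * q ≤ (a / q) * q := by nlinarith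
    _ = a := div_mul_cancel₀ a hq'
  have ha2 : a < ((m : ℝ) + 1) * q := by
    have := Int.lt_floor_add_one (a / q); rw [← hm] at this
    have : a / q * q < ((m : ℝ) + 1) * q := by nlinarith
    rwa [div_mul_cancel₀ a hq'] at this
  have hb1 : (n : ℝ) * q ≤ b := by
    have := Int.floor_le (b / q); rw [← hn] at this
    calc (n : ℝ) * q ≤ (b / q) * q := by nlinarith
    _ = b := div_mul_cancel₀ b hq'
  have hb2 : b < ((n : ℝ) + 1) * q := by
    have := Int.lt_floor_add_one (b / q); rw [← hn] at this
    have : b / q * q < ((n : ℝ) + 1) * q := by nlinarith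
    rwa [div_mul_cancel₀ b hq'] at this
  have hmn : m ≤ n := Int.floor_le_floor (by gcongr)
  have hm0 : 0 ≤ m := Int.floor_nonneg.2 (div_nonneg ha hq.le)
  have hmnR : (m : ℝ) ≤ (n : ℝ) := by exact_mod_cast hmn
  unfold phi1
  rw [hla, hlb]
  by_cases hme : Even m <;> by_cases hne : Even n <;>
    simp only [hme, hne, if_true, if_false, if_pos, if_neg]
  · -- both even
    rcases eq_or_lt_of_le hmn with h | h
    · have hR : (m : ℝ) = (n : ℝ) := by exact_mod_cast h
      rw [hR]; constructor <;> linarith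
    · have h2 : m + 2 ≤ n := by
        obtain ⟨r, hr⟩ := hme; obtain ⟨s, hs⟩ := hne; omega
      have h2R : (m : ℝ) + 2 ≤ (n : ℝ) := by exact_mod_cast h2
      constructor
      · nlinarith
      · nlinarith [mul_nonneg (by linarith : (0:ℝ) ≤ (n:ℝ) - m - 2) hq.le]
  · -- m even, n odd
    have h1 : m + 1 ≤ n := Int.lt_iff_add_one_le.mp
      (lt_of_le_of_ne hmn (by intro hh; rw [hh] at hme; exact hne hme))
    have h1R : (m : ℝ) + 1 ≤ (n : ℝ) := by exact_mod_cast h1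
    constructor
    · nlinarith
    · nlinarith
  · -- m odd, n even
    have h1 : m + 1 ≤ n := Int.lt_iff_add_one_le.mp
      (lt_of_le_of_ne hmn (by intro hh; rw [hh] at hme; exact hme hne))
    have h1R : (m : ℝ) + 1 ≤ (n : ℝ) := by exact_mod_cast h1
    constructor
    · nlinarith
    · nlinarith
  · -- both odd
    rcases eq_or_lt_of_le hmn with h | h
    · have hR : (m : ℝ) = (n : ℝ) := by exact_mod_cast h
      rw [hR]; constructor <;> linarith
    · have h2 : m + 2 ≤ n := by
        rw [Int.not_even_iff_odd] at hme hne
        obtain ⟨r, hr⟩ := hme; obtain ⟨s, hs⟩ := hne; omega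
      have h2R : (m : ℝ) + 2 ≤ (n : ℝ) := by exact_mod_cast h2
      constructor
      · nlinarith
      · nlinarith

theorem stmt5 (q : ℝ) (hq : 0 < q) :
    MonotoneOn (fun p => phi1 p q) (Set.Ici 0) ∧
    ContinuousOn (fun p => phi1 p q) (Set.Ici 0) := by
  have key := phi1_key q hq
  have hmono : MonotoneOn (fun p => phi1 p q) (Set.Ici 0) := by
    intro a ha b _ hab
    exact (key a b ha hab).1
  refine ⟨hmono, ?_⟩
  have hlip : LipschitzOnWith 1 (fun p => phi1 p q) (Set.Ici 0) := by
    rw [lipschitzOnWith_iff_dist_le_mul]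
    intro a ha b hb
    simp only [Real.dist_eq, NNReal.coe_one, one_mul]
    rcases le_total a b with h | h
    · have hk := key a b ha h
      have e1 : |phi1 a q - phi1 b q| = phi1 b q - phi1 a q := by
        rw [abs_sub_comm]; exact abs_of_nonneg (by linarith [hk.1])
      have e2 : |a - b| = b - a := by
        rw [abs_sub_comm]; exact abs_of_nonneg (by linarith)
      rw [e1, e2]; linarith [hk.2]
    · have hk := key b a hb h
      have e1 : |phi1 a q - phi1 b q| = phi1 a q - phi1 b q :=
        abs_of_nonneg (by linarith [hk.1])
      have e2 : |a - b| = a - b := abs_of_nonneg (by linarith)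
      rw [e1, e2]; linarith [hk.2]
  exact hlip.continuousOn
end

section
/- The function (p,q) ↦ φ2(p,q) is continuous on the set {(p,q) ∈ ℝ² : p ≥ 0, q > 0}. -/
lemma phi2_key (p q : ℝ) (hq : 0 < q) :
    phi2 p q = (p + q - q * ‖(((p/q - 1) : ℝ) : AddCircle (2:ℝ))‖) / 2 := by
  have hq0 : q ≠ 0 := hq.ne'
  set t := p / q with ht
  have hpt : p = q * t := by rw [ht]; field_simp
  rw [AddCircle.norm_eq]
  have hround : round ((2:ℝ)⁻¹ * (t - 1)) = ⌊t / 2⌋ := by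
    rw [round_eq]
    congr 1
    ring
  rw [hround]
  have hl : l p q = ⌊t⌋ := by simp [l, hq0, ht]
  rcases Int.even_or_odd ⌊t⌋ with ⟨m, hm⟩ | ⟨m, hm⟩
  · have hfl : ⌊t / 2⌋ = m := by
      have h1 : (2*m : ℝ) ≤ t := by
        have := Int.floor_le t; rw [hm] at this; push_cast at this; linarith
      have h2 : t < 2*m + 1 := by
        have := Int.lt_floor_add_one t; rw [hm] at this; push_cast at this; linarith
      rw [Int.floor_eq_iff]
      constructor <;> [skip; push_cast] <;> linarith
    rw [hfl]
    have habs : |t - 1 - ↑m * 2| = 2*m + 1 - t := by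
      rw [abs_of_nonpos] <;>
      · have h1 : (2*m : ℝ) ≤ t := by
          have := Int.floor_le t; rw [hm] at this; push_cast at this; linarith
        have h2 : t < 2*m + 1 := by
          have := Int.lt_floor_add_one t; rw [hm] at this; push_cast at this; linarith
        push_cast; linarith
    rw [habs]
    have : Even (l p q) := by rw [hl, hm]; exact Even.add_self m
    rw [phi2, if_pos this, hl, hm]
    push_cast
    rw [hpt]; ring
  · have hfl : ⌊t / 2⌋ = m := by
      have h1 : (2*m + 1 : ℝ) ≤ t := by
        have := Int.floor_le t; rw [hm] at this; push_cast at this; linarith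
      have h2 : t < 2*m + 2 := by
        have := Int.lt_floor_add_one t; rw [hm] at this; push_cast at this; linarith
      rw [Int.floor_eq_iff]
      constructor <;> [skip; push_cast] <;> linarith
    rw [hfl]
    have h1 : (2*m + 1 : ℝ) ≤ t := by
      have := Int.floor_le t; rw [hm] at this; push_cast at this; linarith
    have habs : |t - 1 - ↑m * 2| = t - 1 - 2*m := by
      rw [abs_of_nonneg] <;> linarith
    rw [habs]
    have : ¬ Even (l p q) := by
      rw [hl, hm]; simp [Int.even_add_one, parity_simps]
    rw [phi2, if_neg this, hl, hm]
    push_cast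
    rw [hpt]; ring

theorem stmt7 :
    ContinuousOn (fun x : ℝ × ℝ => phi2 x.1 x.2) {x : ℝ × ℝ | 0 ≤ x.1 ∧ 0 < x.2} := by
  have heq : ∀ x ∈ {x : ℝ × ℝ | 0 ≤ x.1 ∧ 0 < x.2},
      phi2 x.1 x.2 =
        (x.1 + x.2 - x.2 * ‖((x.1/x.2 - 1 : ℝ) : AddCircle (2:ℝ))‖) / 2 :=
    fun x hx => phi2_key x.1 x.2 hx.2
  apply ContinuousOn.congr _ heq
  apply ContinuousOn.div_const
  apply ContinuousOn.sub (by fun_prop)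
  apply ContinuousOn.mul continuousOn_snd
  have hcoe : Continuous (fun y : ℝ => ‖((y : AddCircle (2:ℝ)))‖) :=
    continuous_norm.comp (AddCircle.continuous_mk' 2)
  apply hcoe.comp_continuousOn
  apply ContinuousOn.sub _ continuousOn_const
  exact ContinuousOn.div continuousOn_fst continuousOn_snd (fun x hx => hx.2.ne')
end

section
/- Let (a_k), (b_k), (t_k) be sequences of natural numbers with t_k → ∞, a_k/t_k → a and b_k/t_k → b for real numbers a ≥ 0 and 0 ≤ b < 1. Then φ2(b_k − a_k, t_k − b_k)/t_k → φ2(b − a, 1 − b) as k → ∞, provided a ≤ b and b_k ≥ a_k, t_k ≥ b_k for all k. -/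
noncomputable def D (y : ℝ) : ℝ := |y - round y|

lemma D_le (y : ℝ) (n : ℤ) : D y ≤ |y - n| := by
  by_cases h : n = round y
  · simp [D, h]
  · have h1 : |y - round y| ≤ 1/2 := abs_sub_round y
    have h2 : (1 : ℝ) ≤ |(n : ℝ) - round y| := by
      have hne : n - round y ≠ 0 := sub_ne_zero.mpr h
      have := Int.one_le_abs hne
      calc (1:ℝ) = ((1:ℤ):ℝ) := by norm_num
        _ ≤ ((|n - round y| : ℤ) : ℝ) := by exact_mod_cast this
        _ = |(n:ℝ) - round y| := by push_cast [abs_sub_comm]; rw [abs_sub_comm]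
    have h3 : |(n:ℝ) - round y| ≤ |y - n| + |y - round y| := by
      calc |(n:ℝ) - round y| = |((n:ℝ) - y) - ((round y : ℝ) - y)| := by ring_nf
        _ ≤ |(n:ℝ) - y| + |(round y : ℝ) - y| := abs_sub _ _
        _ = |y - n| + |y - round y| := by rw [abs_sub_comm, abs_sub_comm ((round y:ℝ))]
    unfold D
    linarith

lemma D_lipschitz : LipschitzWith 1 D := by
  apply LipschitzWith.of_dist_le_mul
  intro x y
  simp only [Real.dist_eq, NNReal.coe_one, one_mul]
  have h1 : D x ≤ |x - y| + D y := by
    calc D x ≤ |x - round y| := D_le x (round y)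
      _ = |(x - y) + (y - round y)| := by ring_nf
      _ ≤ |x - y| + |y - round y| := abs_add_le _ _
  have h2 : D y ≤ |x - y| + D x := by
    calc D y ≤ |y - round x| := D_le y (round x)
      _ = |(y - x) + (x - round x)| := by ring_nf
      _ ≤ |y - x| + |x - round x| := abs_add_le _ _
      _ = |x - y| + D x := by rw [abs_sub_comm]; rfl
  rw [abs_sub_le_iff]
  constructor <;> linarith

lemma D_continuous : Continuous D := D_lipschitz.continuous

lemma phi2_eq (p q : ℝ) (hq : 0 < q) :
    phi2 p q = p / 2 + q * D (p / (2 * q)) := by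
  have hq0 : q ≠ 0 := ne_of_gt hq
  set n : ℤ := ⌊p / q⌋ with hn
  have hl : l p q = n := by simp [l, hq0, hn]
  have h1 : (n : ℝ) ≤ p / q := Int.floor_le _
  have h2 : p / q < n + 1 := Int.lt_floor_add_one _
  have hx : p / (2 * q) = (p / q) / 2 := by rw [div_div, mul_comm]
  have hp : p = (p / q) * q := by field_simp
  rcases Int.even_or_odd n with ⟨m, hm⟩ | ⟨m, hm⟩
  · have hy1 : (m : ℝ) ≤ p / (2 * q) := by
      rw [hx]; rw [hm] at h1; push_cast at h1; linarith
    have hy2 : p / (2 * q) < m + 1/2 := by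
      rw [hx]; rw [hm] at h2; push_cast at h2; linarith
    have hr : round (p / (2 * q)) = m := by
      rw [round_eq, Int.floor_eq_iff] <;> push_cast <;> constructor <;> linarith
    have hD : D (p / (2 * q)) = p / (2 * q) - m := by
      rw [D, hr, abs_of_nonneg (by linarith)]
    rw [phi2, hl, if_pos ⟨m, by omega⟩, hD, hm]
    push_cast
    field_simp
    ring
  · have hy1 : (m : ℝ) + 1/2 ≤ p / (2 * q) := by
      rw [hx]; rw [hm] at h1; push_cast at h1; linarith
    have hy2 : p / (2 * q) < m + 1 := by
      rw [hx]; rw [hm] at h2; push_cast at h2; linarith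
    have hr : round (p / (2 * q)) = m + 1 := by
      rw [round_eq, Int.floor_eq_iff] <;> push_cast <;> constructor <;> linarith
    have hD : D (p / (2 * q)) = (m : ℝ) + 1 - p / (2 * q) := by
      rw [D, hr, abs_of_nonpos (by push_cast; linarith)]
      push_cast; ring
    rw [phi2, hl, if_neg (by simp [hm, parity_simps]), hD, hm]
    push_cast
    field_simp
    ring

theorem stmt10 (a b : ℝ) (ha : 0 ≤ a) (hb0 : 0 ≤ b) (hb1 : b < 1) (hab : a ≤ b)
    (A B T : ℕ → ℕ)
    (hT : Filter.Tendsto (fun k => (T k : ℝ)) Filter.atTop Filter.atTop)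
    (hA : Filter.Tendsto (fun k => (A k : ℝ) / (T k : ℝ)) Filter.atTop (nhds a))
    (hB : Filter.Tendsto (fun k => (B k : ℝ) / (T k : ℝ)) Filter.atTop (nhds b))
    (hAB : ∀ k, A k ≤ B k) (hBT : ∀ k, B k ≤ T k) :
    Filter.Tendsto
      (fun k => phi2 ((B k : ℝ) - (A k : ℝ)) ((T k : ℝ) - (B k : ℝ)) / (T k : ℝ))
      Filter.atTop (nhds (phi2 (b - a) (1 - b))) := by
  have hb1' : 0 < 1 - b := by linarith
  -- limits of the normalized sequences
  have hq : Filter.Tendsto (fun k => ((T k : ℝ) - B k) / T k) Filter.atTop (nhds (1 - b)) := by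
    have hT0 : ∀ᶠ k in Filter.atTop, (0:ℝ) < T k := hT.eventually_gt_atTop 0
    apply Filter.Tendsto.congr' _ ((Filter.Tendsto.const_sub 1 hB))
    filter_upwards [hT0] with k hk
    field_simp
  have hp : Filter.Tendsto (fun k => ((B k : ℝ) - A k) / T k) Filter.atTop (nhds (b - a)) := by
    have hT0 : ∀ᶠ k in Filter.atTop, (0:ℝ) < T k := hT.eventually_gt_atTop 0
    apply Filter.Tendsto.congr' _ (hB.sub hA)
    filter_upwards [hT0] with k hk
    ring
  -- eventually T k > 0 and T k - B k > 0
  have hE : ∀ᶠ k in Filter.atTop, (0:ℝ) < T k ∧ (0:ℝ) < (T k : ℝ) - B k := by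
    have hT0 : ∀ᶠ k in Filter.atTop, (0:ℝ) < T k := hT.eventually_gt_atTop 0
    have hq0 : ∀ᶠ k in Filter.atTop, (0:ℝ) < ((T k : ℝ) - B k) / T k :=
      hq.eventually (eventually_gt_nhds hb1')
    filter_upwards [hT0, hq0] with k h1 h2
    refine ⟨h1, ?_⟩
    rcases div_pos_iff.mp h2 with ⟨hn, _⟩ | ⟨_, hd⟩
    · exact hn
    · linarith
  -- the limit of the closed form
  have hArg : Filter.Tendsto (fun k => (((B k : ℝ) - A k) / T k) / (2 * (((T k : ℝ) - B k) / T k)))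
      Filter.atTop (nhds ((b - a) / (2 * (1 - b)))) :=
    hp.div (hq.const_mul 2) (ne_of_gt (by linarith))
  have hMain : Filter.Tendsto
      (fun k => (((B k : ℝ) - A k) / T k) / 2 +
        (((T k : ℝ) - B k) / T k) * D ((((B k : ℝ) - A k) / T k) / (2 * (((T k : ℝ) - B k) / T k))))
      Filter.atTop (nhds ((b - a) / 2 + (1 - b) * D ((b - a) / (2 * (1 - b))))) := by
    exact (hp.div_const 2).add (hq.mul ((D_continuous.continuousAt).tendsto.comp hArg))
  rw [phi2_eq (b - a) (1 - b) hb1']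
  apply Filter.Tendsto.congr' _ hMain
  filter_upwards [hE] with k ⟨hk1, hk2⟩
  have hT0 : (T k : ℝ) ≠ 0 := ne_of_gt hk1
  rw [phi2_eq _ _ hk2]
  have harg : (((B k : ℝ) - A k) / T k) / (2 * (((T k : ℝ) - B k) / T k))
      = ((B k : ℝ) - A k) / (2 * ((T k : ℝ) - B k)) := by
    field_simp
  rw [harg]
  field_simp
end

section
/- For all real numbers a with 1/2 < a < 2/3 and b with 0 < b < 1, we have 2a + φ2(2 − 3a, 1 − b) ≥ 1 + a/2, and consequently 2a + φ2(2 − 3a, 1 − b) > 2a; that is, the deterministic-model sum-rate bound strictly exceeds the interference-channel W-curve value 2a in this regime. -/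
theorem stmt15 (a b : ℝ) (ha1 : 1/2 < a) (ha2 : a < 2/3) (hb1 : 0 < b) (hb2 : b < 1) :
    1 + a / 2 ≤ 2 * a + phi2 (2 - 3 * a) (1 - b) ∧
    2 * a < 2 * a + phi2 (2 - 3 * a) (1 - b) := by
  set p : ℝ := 2 - 3 * a with hp
  set q : ℝ := 1 - b with hq
  have hq0 : (0:ℝ) < q := by simp only [hq]; linarith
  have hl : l p q = ⌊p / q⌋ := by simp [l, ne_of_gt hq0]
  have h1 : (⌊p / q⌋ : ℝ) * q ≤ p := by
    have h := Int.floor_le (p / q)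
    calc (⌊p / q⌋ : ℝ) * q ≤ (p / q) * q := by nlinarith
    _ = p := by field_simp
  have h2 : p < ((⌊p / q⌋ : ℝ) + 1) * q := by
    have h := Int.lt_floor_add_one (p / q)
    calc p = (p / q) * q := by field_simp
    _ < ((⌊p / q⌋ : ℝ) + 1) * q := by nlinarith
  have hphi : p / 2 ≤ phi2 p q := by
    unfold phi2
    rw [hl]
    split <;> linarith
  constructor <;> simp only [hp, hq] at hphi ⊢ <;> linarith
end

section
/- Fix a real number b with 2/3 < b < 1 and let ā = min(1 − b/2, 2/3). Define F : [0, b) → ℝ by F(a) = 1 + b − 2a + φ1(a, 1−b) for a ∈ [0, 1/2], F(a) = 2a + φ2(b − a, 1−b) for a ∈ (1/2, ā), F(a) = 2a + φ2(2 − 3a, 1−b) for a ∈ [ā, 2/3), and F(a) = min(2, max(1,a) + max(1−a,0)) for a ∈ [2/3, b). Then F is continuous on [0, b). -/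
lemma floor_bounds {q : ℝ} (hq : 0 < q) (p : ℝ) :
    (⌊p/q⌋ : ℝ) * q ≤ p ∧ p < ((⌊p/q⌋ : ℝ) + 1) * q := by
  constructor
  · exact (le_div_iff₀ hq).mp (Int.floor_le (p/q))
  · exact (div_lt_iff₀ hq).mp (Int.lt_floor_add_one (p/q))

lemma phi2_mono {q : ℝ} (hq : 0 < q) {p1 p2 : ℝ} (h : p1 ≤ p2) : phi2 p1 q ≤ phi2 p2 q := by
  have hq' : q ≠ 0 := ne_of_gt hq
  have b1 := floor_bounds hq p1
  have b2 := floor_bounds hq p2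
  have hle : ⌊p1/q⌋ ≤ ⌊p2/q⌋ := Int.floor_le_floor (by gcongr)
  unfold phi2 l
  rw [if_neg hq', if_neg hq']
  set n1 := ⌊p1/q⌋ with hn1
  set n2 := ⌊p2/q⌋ with hn2
  have hleR : (n1 : ℝ) ≤ n2 := by exact_mod_cast hle
  by_cases h1 : Even n1 <;> by_cases h2 : Even n2 <;> simp only [h1, h2, if_true, if_false,
    if_pos, if_neg, not_false_iff, not_true]
  · -- even even
    have hgap : n1 = n2 ∨ n1 + 2 ≤ n2 := by
      obtain ⟨a, ha⟩ := h1; obtain ⟨c, hc⟩ := h2; omega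
    rcases hgap with heq | hgap
    · have heqR : (n1 : ℝ) = n2 := by exact_mod_cast heq
      rw [heqR]; linarith
    · have hgapR : (n1 : ℝ) + 2 ≤ n2 := by exact_mod_cast hgap
      nlinarith [b1.2, b2.1]
  · -- even odd
    have hgap : n1 + 1 ≤ n2 := by
      obtain ⟨a, ha⟩ := h1
      obtain ⟨c, hc⟩ := Int.not_even_iff_odd.mp h2
      omega
    have hgapR : (n1 : ℝ) + 1 ≤ n2 := by exact_mod_cast hgap
    nlinarith [b1.2]
  · -- odd even
    have hgap : n1 + 1 ≤ n2 := by
      obtain ⟨a, ha⟩ := Int.not_even_iff_odd.mp h1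
      obtain ⟨c, hc⟩ := h2
      omega
    have hgapR : (n1 : ℝ) + 1 ≤ n2 := by exact_mod_cast hgap
    nlinarith [b2.1]
  · nlinarith [hleR]

lemma phi2_sub_mono {q : ℝ} (hq : 0 < q) {p1 p2 : ℝ} (h : p1 ≤ p2) :
    p1 - phi2 p1 q ≤ p2 - phi2 p2 q := by
  have hq' : q ≠ 0 := ne_of_gt hq
  have b1 := floor_bounds hq p1
  have b2 := floor_bounds hq p2
  have hle : ⌊p1/q⌋ ≤ ⌊p2/q⌋ := Int.floor_le_floor (by gcongr)
  unfold phi2 l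
  rw [if_neg hq', if_neg hq']
  set n1 := ⌊p1/q⌋ with hn1
  set n2 := ⌊p2/q⌋ with hn2
  have hleR : (n1 : ℝ) ≤ n2 := by exact_mod_cast hle
  by_cases h1 : Even n1 <;> by_cases h2 : Even n2 <;> simp only [h1, h2, if_true, if_false,
    if_pos, if_neg, not_false_iff, not_true]
  · nlinarith [hleR]
  · have hgap : n1 + 1 ≤ n2 := by
      obtain ⟨a, ha⟩ := h1
      obtain ⟨c, hc⟩ := Int.not_even_iff_odd.mp h2
      omega
    have hgapR : (n1 : ℝ) + 1 ≤ n2 := by exact_mod_cast hgap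
    nlinarith [b2.1]
  · have hgap : n1 + 1 ≤ n2 := by
      obtain ⟨a, ha⟩ := Int.not_even_iff_odd.mp h1
      obtain ⟨c, hc⟩ := h2
      omega
    have hgapR : (n1 : ℝ) + 1 ≤ n2 := by exact_mod_cast hgap
    nlinarith [b1.2]
  · have hgap : n1 = n2 ∨ n1 + 2 ≤ n2 := by
      obtain ⟨a, ha⟩ := Int.not_even_iff_odd.mp h1
      obtain ⟨c, hc⟩ := Int.not_even_iff_odd.mp h2
      omega
    rcases hgap with heq | hgap
    · have heqR : (n1 : ℝ) = n2 := by exact_mod_cast heq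
      rw [heqR]; linarith
    · have hgapR : (n1 : ℝ) + 2 ≤ n2 := by exact_mod_cast hgap
      nlinarith [b1.2, b2.1]

lemma phi2_continuous {q : ℝ} (hq : 0 < q) : Continuous fun p => phi2 p q := by
  have hlip : LipschitzWith 1 fun p => phi2 p q := by
    apply LipschitzWith.of_dist_le_mul
    intro x y
    rw [NNReal.coe_one, one_mul, Real.dist_eq, Real.dist_eq]
    rcases le_total x y with hxy | hxy
    · have h1 := phi2_mono hq hxy
      have h2 := phi2_sub_mono hq hxy
      rw [abs_of_nonpos (by linarith), abs_of_nonpos (by linarith)]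
      linarith
    · have h1 := phi2_mono hq hxy
      have h2 := phi2_sub_mono hq hxy
      rw [abs_of_nonneg (by linarith), abs_of_nonneg (by linarith)]
      linarith
  exact hlip.continuous

lemma phi1_eq_phi2 {q : ℝ} (hq : 0 < q) (p : ℝ) : phi1 p q = phi2 (p + q) q := by
  have hq' : q ≠ 0 := ne_of_gt hq
  have hl : l (p + q) q = l p q + 1 := by
    simp only [l, if_neg hq']
    rw [show (p + q)/q = p/q + 1 by field_simp]
    exact_mod_cast Int.floor_add_one (p/q)
  unfold phi1 phi2
  rw [hl]
  by_cases h : Even (l p q)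
  · rw [if_pos h, if_neg (fun he => (Int.even_add_one.mp he) h)]
    push_cast; ring
  · rw [if_neg h, if_pos (Int.even_add_one.mpr h)]
    push_cast; ring

lemma phi2_add_two {q : ℝ} (hq : 0 < q) (p : ℝ) : phi2 (p + 2*q) q = phi2 p q + q := by
  have hq' : q ≠ 0 := ne_of_gt hq
  have hl : l (p + 2*q) q = l p q + 2 := by
    simp only [l, if_neg hq']
    rw [show (p + 2*q)/q = p/q + (2:ℤ) by push_cast; field_simp]
    exact Int.floor_add_intCast (p/q) 2
  have hpar : Even (l p q + 2) ↔ Even (l p q) := by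
    constructor
    · rintro ⟨r, hr⟩; exact ⟨r - 1, by omega⟩
    · rintro ⟨r, hr⟩; exact ⟨r + 1, by omega⟩
  unfold phi2
  rw [hl]
  by_cases h : Even (l p q)
  · rw [if_pos h, if_pos (hpar.mpr h)]
    push_cast; ring
  · rw [if_neg h, if_neg (fun he => h (hpar.mp he))]
    push_cast; ring

lemma phi2_zero {q : ℝ} (hq : 0 < q) : phi2 0 q = 0 := by
  have hq' : q ≠ 0 := ne_of_gt hq
  unfold phi2 l
  rw [if_neg hq']
  norm_num

lemma cwa_part {f g : ℝ → ℝ} {s t : Set ℝ} {x : ℝ} (ht : IsClosed t) (hg : Continuous g)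
    (hfg : ∀ y ∈ s ∩ t, f y = g y) (hx : x ∈ s) : ContinuousWithinAt f (s ∩ t) x := by
  by_cases hxt : x ∈ t
  · exact (hg.continuousWithinAt).congr hfg (hfg x ⟨hx, hxt⟩)
  · apply continuousWithinAt_of_notMem_closure
    intro hcl
    exact hxt (ht.closure_eq ▸ closure_mono Set.inter_subset_right hcl)

theorem stmt16 (b : ℝ) (hb1 : 2/3 < b) (hb2 : b < 1) :
    ContinuousOn (fun a : ℝ =>
      if a ≤ 1/2 then 1 + b - 2 * a + phi1 a (1 - b)
      else if a < min (1 - b/2) (2/3) then 2 * a + phi2 (b - a) (1 - b)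
      else if a < 2/3 then 2 * a + phi2 (2 - 3 * a) (1 - b)
      else min 2 (max 1 a + max (1 - a) 0))
      (Set.Ico 0 b) := by
  have hq : (0:ℝ) < 1 - b := by linarith
  have hc2 : (1:ℝ)/2 < 1 - b/2 := by linarith
  have hc23 : 1 - b/2 < (2:ℝ)/3 := by linarith
  have hmin : min (1 - b/2) (2/3 : ℝ) = 1 - b/2 := min_eq_left (le_of_lt hc23)
  have hphi : Continuous fun p => phi2 p (1 - b) := phi2_continuous hq
  set f : ℝ → ℝ := fun a : ℝ =>
      if a ≤ 1/2 then 1 + b - 2 * a + phi1 a (1 - b)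
      else if a < min (1 - b/2) (2/3) then 2 * a + phi2 (b - a) (1 - b)
      else if a < 2/3 then 2 * a + phi2 (2 - 3 * a) (1 - b)
      else min 2 (max 1 a + max (1 - a) 0) with hf
  have hG1 : Continuous fun a : ℝ => 1 + b - 2 * a + phi2 (a + (1 - b)) (1 - b) := by
    exact Continuous.add (by fun_prop) (hphi.comp (by fun_prop))
  have hG2 : Continuous fun a : ℝ => 2 * a + phi2 (b - a) (1 - b) := by
    exact Continuous.add (by fun_prop) (hphi.comp (by fun_prop))
  have hG3 : Continuous fun a : ℝ => 2 * a + phi2 (2 - 3 * a) (1 - b) := by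
    exact Continuous.add (by fun_prop) (hphi.comp (by fun_prop))
  have hG4 : Continuous fun a : ℝ => min 2 (max 1 a + max (1 - a) 0) := by fun_prop
  -- key pointwise identities
  have key1 : ∀ y ∈ Set.Ico (0:ℝ) b ∩ Set.Iic (1/2),
      f y = 1 + b - 2 * y + phi2 (y + (1 - b)) (1 - b) := by
    intro y hy
    simp only [hf]
    rw [if_pos (show y ≤ 1/2 from hy.2), phi1_eq_phi2 hq]
  have key2 : ∀ y ∈ Set.Ico (0:ℝ) b ∩ Set.Icc (1/2) (1 - b/2),
      f y = 2 * y + phi2 (b - y) (1 - b) := by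
    intro y hy
    rcases eq_or_lt_of_le hy.2.1 with heq | hlt
    · -- y = 1/2
      simp only [hf, ← heq]
      rw [if_pos (le_refl _)]
      have e1 : phi1 (1/2) (1 - b) = phi2 ((1:ℝ)/2 + (1 - b)) (1 - b) := phi1_eq_phi2 hq _
      have e2 : (1:ℝ)/2 + (1 - b) = (b - 1/2) + 2 * (1 - b) := by ring
      have e3 : phi2 ((b - 1/2) + 2 * (1 - b)) (1 - b) = phi2 (b - 1/2) (1 - b) + (1 - b) :=
        phi2_add_two hq _
      rw [e1, e2, e3]
      ring
    · simp only [hf]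
      rw [if_neg (not_le.mpr hlt)]
      rcases lt_or_eq_of_le hy.2.2 with hlt2 | heq2
      · rw [if_pos (by rw [hmin]; exact hlt2)]
      · rw [if_neg (by rw [hmin, heq2]; exact lt_irrefl _), if_pos (by rw [heq2]; exact hc23)]
        have : 2 - 3 * y = b - y := by rw [heq2]; ring
        rw [this]
  have key3 : ∀ y ∈ Set.Ico (0:ℝ) b ∩ Set.Icc (1 - b/2) (2/3),
      f y = 2 * y + phi2 (2 - 3 * y) (1 - b) := by
    intro y hy
    have h1 : ¬ y ≤ 1/2 := not_le.mpr (lt_of_lt_of_le hc2 hy.2.1)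
    have h2 : ¬ y < min (1 - b/2) (2/3) := by rw [hmin]; exact not_lt.mpr hy.2.1
    rcases lt_or_eq_of_le hy.2.2 with hlt | heq
    · simp only [hf]; rw [if_neg h1, if_neg h2, if_pos hlt]
    · simp only [hf]
      rw [if_neg h1, if_neg h2, if_neg (by rw [heq]; exact lt_irrefl _)]
      rw [heq]
      have e0 : (2:ℝ) - 3 * (2/3) = 0 := by norm_num
      rw [e0, phi2_zero hq]
      norm_num
  have key4 : ∀ y ∈ Set.Ico (0:ℝ) b ∩ Set.Ici (2/3),
      f y = min 2 (max 1 y + max (1 - y) 0) := by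
    intro y hy
    have h1 : ¬ y ≤ 1/2 := by
      have : (2:ℝ)/3 ≤ y := hy.2
      intro h; linarith
    have h2 : ¬ y < min (1 - b/2) (2/3) := by
      rw [hmin]
      have : (2:ℝ)/3 ≤ y := hy.2
      intro h; linarith
    have h3 : ¬ y < 2/3 := not_lt.mpr hy.2
    simp only [hf]; rw [if_neg h1, if_neg h2, if_neg h3]
  intro x hx
  have P1 := cwa_part isClosed_Iic hG1 key1 hx
  have P2 := cwa_part isClosed_Icc hG2 key2 hx
  have P3 := cwa_part isClosed_Icc hG3 key3 hx
  have P4 := cwa_part isClosed_Ici hG4 key4 hx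
  have hsub : Set.Ico (0:ℝ) b ⊆ (Set.Ico (0:ℝ) b ∩ Set.Iic (1/2)) ∪
      ((Set.Ico (0:ℝ) b ∩ Set.Icc (1/2) (1 - b/2)) ∪
      ((Set.Ico (0:ℝ) b ∩ Set.Icc (1 - b/2) (2/3)) ∪
      (Set.Ico (0:ℝ) b ∩ Set.Ici (2/3)))) := by
    intro y hy
    by_cases k1 : y ≤ 1/2
    · exact Or.inl ⟨hy, k1⟩
    · by_cases k2 : y ≤ 1 - b/2
      · exact Or.inr (Or.inl ⟨hy, le_of_not_ge k1, k2⟩)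
      · by_cases k3 : y ≤ 2/3
        · exact Or.inr (Or.inr (Or.inl ⟨hy, le_of_not_ge k2, k3⟩))
        · exact Or.inr (Or.inr (Or.inr ⟨hy, le_of_not_ge k3⟩))
  exact (P1.union (P2.union (P3.union P4))).mono hsub
end
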